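/- arXiv:2410.00254 — 2 statements merged into one kernel-verified Lean document; each statement's English description precedes it below -/
import Mathlib

section
/- Let ν:[0,∞)→ℝ^d be continuous and satisfy, for some c ∈ [1,∞), sup_{ξ′∈[0,ξ]} |ν(ξ′)| ≤ c(1 + ξ + |ν(ξ)|) for every ξ ∈ [0,∞). Let T > 0 and let ρ : ℝ^d × [0,T] → [0,∞) be measurable with ess sup_{t∈[0,T]} ‖ρ(·,t)‖_{L¹(ℝ^d)} < ∞ and with ν∘ρ ∈ L¹_loc(ℝ^d × [0,T])^d. Then for every R > 0, lim_{M→∞} ∫_0^T ∫_{B_R} ( sup_{ξ ∈ [M, min(M+1, ρ(x,t))]} |ν(ξ)| ) · 𝟙_{ρ(x,t) > M} dx dt = 0; that is, sup_{ξ∈[M,(M+1)∧ρ]} |ν(ξ)| 𝟙_{ρ>M} → 0 strongly in L¹_loc(ℝ^d × [0,T]) as M → ∞. -/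
/-!
Above level `M` the integrand only sees the window `[M, (M+1) ∧ ρ]`, so it vanishes as soon as
`M ≥ ρ`, and by the growth condition it is dominated by `c (1 + ρ + |ν(ρ)|)` uniformly in `M ≥ 0`.
That majorant is locally integrable because `ρ ∈ L^∞_t L¹_x` on the bounded time interval and
`ν ∘ ρ ∈ L¹_loc`, so dominated convergence applies. For `M ≥ 0` the integrand is a monotone
function of `ρ`, which gives its measurability.
-/

open MeasureTheory Filter Set Topology

/-- `truncSup f M r = sup_{ξ ∈ [M, (M+1) ∧ r]} f ξ · 𝟙_{r > M}`. -/
noncomputable def truncSup (f : ℝ → ℝ) (M r : ℝ) : ℝ :=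
  (Ioi M).indicator (fun r => sSup (f '' Icc M (min (M + 1) r))) r

section truncSup

variable {f G : ℝ → ℝ} {M r : ℝ}

theorem truncSup_of_le (h : r ≤ M) : truncSup f M r = 0 :=
  indicator_of_notMem (not_lt.2 h) _

theorem truncSup_of_lt (h : M < r) : truncSup f M r = sSup (f '' Icc M (min (M + 1) r)) :=
  indicator_of_mem h _

theorem truncSup_nonneg (hf : ∀ ξ, 0 ≤ f ξ) : 0 ≤ truncSup f M r :=
  indicator_nonneg (fun _ _ => Real.sSup_nonneg (by rintro _ ⟨ξ, -, rfl⟩; exact hf ξ)) _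

theorem mem_image_Icc_min_of_lt (h : M < r) : f M ∈ f '' Icc M (min (M + 1) r) :=
  mem_image_of_mem f ⟨le_rfl, le_min (by linarith) h.le⟩

theorem tendsto_truncSup_atTop (r : ℝ) : Tendsto (fun M => truncSup f M r) atTop (𝓝 0) :=
  tendsto_const_nhds.congr' ((eventually_ge_atTop r).mono fun _ hM => (truncSup_of_le hM).symm)

variable (hG : ∀ ξ, 0 ≤ ξ → ∀ ξ' ∈ Icc 0 ξ, f ξ' ≤ G ξ)
include hG

theorem bddAbove_image_Icc_of_growth {a b : ℝ} (ha : 0 ≤ a) : BddAbove (f '' Icc a b) := by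
  refine ⟨G b, ?_⟩
  rintro _ ⟨ξ, ⟨haξ, hξb⟩, rfl⟩
  exact hG b (ha.trans (haξ.trans hξb)) ξ ⟨ha.trans haξ, hξb⟩

theorem truncSup_le (hf : ∀ ξ, 0 ≤ f ξ) (hM : 0 ≤ M) (hr : 0 ≤ r) : truncSup f M r ≤ G r := by
  rcases le_or_gt r M with hrM | hMr
  · rw [truncSup_of_le hrM]
    exact (hf r).trans (hG r hr r ⟨hr, le_rfl⟩)
  · rw [truncSup_of_lt hMr]
    refine csSup_le ⟨_, mem_image_Icc_min_of_lt hMr⟩ ?_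
    rintro _ ⟨ξ, ⟨hMξ, hξr⟩, rfl⟩
    exact hG r hr ξ ⟨hM.trans hMξ, hξr.trans (min_le_right _ _)⟩

theorem monotone_truncSup (hf : ∀ ξ, 0 ≤ f ξ) (hM : 0 ≤ M) : Monotone (truncSup f M) := by
  intro r r' hrr'
  rcases le_or_gt r' M with hr'M | hMr'
  · rw [truncSup_of_le (hrr'.trans hr'M), truncSup_of_le hr'M]
  rcases le_or_gt r M with hrM | hMr
  · rw [truncSup_of_le hrM]
    exact truncSup_nonneg hf
  rw [truncSup_of_lt hMr, truncSup_of_lt hMr']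
  exact csSup_le_csSup (bddAbove_image_Icc_of_growth hG hM) ⟨_, mem_image_Icc_min_of_lt hMr⟩
    (image_mono (Icc_subset_Icc_right (min_le_min_left _ hrr')))

theorem tendsto_integral_truncSup_comp {α : Type*} [MeasurableSpace α] {μ : Measure α}
    (hf : ∀ ξ, 0 ≤ f ξ) {u : α → ℝ} (hu : Measurable u) (hu0 : ∀ p, 0 ≤ u p)
    (hGu : Integrable (G ∘ u) μ) :
    Tendsto (fun M => ∫ p, truncSup f M (u p) ∂μ) atTop (𝓝 0) := by
  have h_meas : ∀ᶠ M in atTop, AEStronglyMeasurable (fun p => truncSup f M (u p)) μ :=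
    (eventually_ge_atTop 0).mono fun M hM =>
      ((monotone_truncSup hG hf hM).measurable.comp hu).aestronglyMeasurable
  have h_bound : ∀ᶠ M in atTop, ∀ᵐ p ∂μ, ‖truncSup f M (u p)‖ ≤ G (u p) :=
    (eventually_ge_atTop 0).mono fun M hM => Eventually.of_forall fun p => by
      rw [Real.norm_of_nonneg (truncSup_nonneg hf)]
      exact truncSup_le hG hf hM (hu0 p)
  simpa using tendsto_integral_filter_of_dominated_convergence _ h_meas h_bound hGu
    (Eventually.of_forall fun p => tendsto_truncSup_atTop (u p))

end truncSup

theorem integrable_uncurry_of_ae_integral_le {α β : Type*} [MeasurableSpace α]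
    [MeasurableSpace β] {μ : Measure α} {ν : Measure β} [SFinite μ] [IsFiniteMeasure ν]
    {f : α → β → ℝ} (hf : AEStronglyMeasurable (Function.uncurry f) (μ.prod ν))
    (hf0 : ∀ x t, 0 ≤ f x t) (C : ℝ)
    (hC : ∀ᵐ t ∂ν, Integrable (f · t) μ ∧ ∫ x, f x t ∂μ ≤ C) :
    Integrable (Function.uncurry f) (μ.prod ν) := by
  refine (integrable_prod_iff' hf).2 ⟨hC.mono fun t ht => ht.1, ?_⟩
  refine (integrable_const C).mono' hf.prod_swap.norm.integral_prod_right' ?_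
  filter_upwards [hC] with t ht
  simpa only [Function.uncurry_apply_pair, Real.norm_of_nonneg (hf0 _ t),
    Real.norm_of_nonneg (integral_nonneg (hf0 · t))] using ht.2

theorem stmt13_general (d : ℕ) (T : ℝ) (c : ℝ)
    (ν : ℝ → EuclideanSpace ℝ (Fin d))
    (hgrowth : ∀ ξ : ℝ, 0 ≤ ξ → ∀ ξ' ∈ Set.Icc 0 ξ, ‖ν ξ'‖ ≤ c * (1 + ξ + ‖ν ξ‖))
    (ρ : EuclideanSpace ℝ (Fin d) → ℝ → ℝ)
    (hρmeas : Measurable (Function.uncurry ρ))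
    (hρnonneg : ∀ x t, 0 ≤ ρ x t)
    (hρL1 : ∃ C : ℝ, ∀ᵐ t ∂(volume.restrict (Set.Icc (0:ℝ) T)),
      Integrable (fun x => ρ x t) volume ∧ ∫ x, ρ x t ≤ C)
    (hνρ : ∀ R : ℝ, 0 < R →
      IntegrableOn (fun p : EuclideanSpace ℝ (Fin d) × ℝ => ‖ν (ρ p.1 p.2)‖)
        ((Metric.ball (0 : EuclideanSpace ℝ (Fin d)) R) ×ˢ Set.Icc (0:ℝ) T) volume) :
    ∀ R : ℝ, 0 < R →
      Filter.Tendsto (fun M : ℝ =>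
        ∫ p in (Metric.ball (0 : EuclideanSpace ℝ (Fin d)) R) ×ˢ Set.Icc (0:ℝ) T,
          Set.indicator {q : EuclideanSpace ℝ (Fin d) × ℝ | M < ρ q.1 q.2}
            (fun q =>
              sSup ((fun ξ => ‖ν ξ‖) '' Set.Icc M (min (M+1) (ρ q.1 q.2)))) p)
        Filter.atTop (nhds 0) := by
  intro R hR
  obtain ⟨C, hC⟩ := hρL1
  set S := Metric.ball (0 : EuclideanSpace ℝ (Fin d)) R ×ˢ Icc (0 : ℝ) T
  have hρ_int : IntegrableOn (Function.uncurry ρ) S := by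
    rw [IntegrableOn, Measure.volume_eq_prod, ← Measure.prod_restrict]
    refine integrable_uncurry_of_ae_integral_le hρmeas.aestronglyMeasurable hρnonneg C ?_
    filter_upwards [hC] with t ⟨ht_int, ht_le⟩
    exact ⟨ht_int.restrict,
      (setIntegral_le_integral ht_int (Eventually.of_forall (hρnonneg · t))).trans ht_le⟩
  have hS_fin : volume S ≠ ⊤ := by
    rw [Measure.volume_eq_prod, Measure.prod_prod]
    exact ENNReal.mul_ne_top measure_ball_lt_top.ne (by simp [Real.volume_Icc])
  have hG_int : IntegrableOn (fun p => c * (1 + ρ p.1 p.2 + ‖ν (ρ p.1 p.2)‖)) S :=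
    (((integrableOn_const hS_fin).add hρ_int).add (hνρ R hR)).const_mul c
  exact tendsto_integral_truncSup_comp (G := fun ξ => c * (1 + ξ + ‖ν ξ‖)) hgrowth
    (fun _ => norm_nonneg _) hρmeas (fun p => hρnonneg p.1 p.2) hG_int

/-- If `ν : [0,∞) → ℝ^d` satisfies the growth condition
`sup_{[0,ξ]} |ν| ≤ c(1 + ξ + |ν(ξ)|)` and `ρ ∈ L^∞_t L¹_x` is nonnegative with
`ν∘ρ ∈ L¹_loc`, then `sup_{ξ∈[M,(M+1)∧ρ]} |ν(ξ)| 𝟙_{ρ>M} → 0` in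
`L¹_loc(ℝ^d × [0,T])` as `M → ∞`. -/
theorem stmt13 (d : ℕ) (T : ℝ) (hT : 0 < T) (c : ℝ) (hc : 1 ≤ c)
    (ν : ℝ → EuclideanSpace ℝ (Fin d)) (hνc : ContinuousOn ν (Set.Ici 0))
    (hgrowth : ∀ ξ : ℝ, 0 ≤ ξ → ∀ ξ' ∈ Set.Icc 0 ξ, ‖ν ξ'‖ ≤ c * (1 + ξ + ‖ν ξ‖))
    (ρ : EuclideanSpace ℝ (Fin d) → ℝ → ℝ)
    (hρmeas : Measurable (Function.uncurry ρ))
    (hρnonneg : ∀ x t, 0 ≤ ρ x t)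
    (hρL1 : ∃ C : ℝ, ∀ᵐ t ∂(volume.restrict (Set.Icc (0:ℝ) T)),
      Integrable (fun x => ρ x t) volume ∧ ∫ x, ρ x t ≤ C)
    (hνρ : ∀ R : ℝ, 0 < R →
      IntegrableOn (fun p : EuclideanSpace ℝ (Fin d) × ℝ => ‖ν (ρ p.1 p.2)‖)
        ((Metric.ball (0 : EuclideanSpace ℝ (Fin d)) R) ×ˢ Set.Icc (0:ℝ) T) volume) :
    ∀ R : ℝ, 0 < R →
      Filter.Tendsto (fun M : ℝ =>
        ∫ p in (Metric.ball (0 : EuclideanSpace ℝ (Fin d)) R) ×ˢ Set.Icc (0:ℝ) T,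
          Set.indicator {q : EuclideanSpace ℝ (Fin d) × ℝ | M < ρ q.1 q.2}
            (fun q =>
              sSup ((fun ξ => ‖ν ξ‖) '' Set.Icc M (min (M+1) (ρ q.1 q.2)))) p)
        Filter.atTop (nhds 0) :=
  stmt13_general d T c ν hgrowth ρ hρmeas hρnonneg hρL1 hνρ
end

section
/- Let Φ, σ ∈ C([0,∞)) ∩ C¹_loc((0,∞)) with Φ(0) = σ(0) = 0 and Φ′(ξ) > 0 for every ξ ∈ (0,∞), and let γ ∈ (0,∞). For β ∈ (0,1) and M ∈ [2,∞), define Φ_{β,M}(ξ) = ∫_0^ξ Φ′ φ_β ζ_M and Σ_{β,M}(ξ) = ∫_0^ξ (σ′)² φ_β ζ_M. Then there exists c_{β,M} ∈ (0,∞), depending on β, M, γ, Φ, and σ, such that for every ξ ∈ [0,∞): |Φ_{β,M}(ξ) − Φ_{β,M}(γ)| + |Σ_{β,M}(ξ) − Σ_{β,M}(γ)| ≤ c_{β,M} ( |Φ^{1/2}(ξ) − Φ^{1/2}(γ)|^{1/2} + |ξ − γ| 𝟙_{|ξ−γ| ≥ γ/2} ). -/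
open MeasureTheory

/-- The small-value cutoff `φ_β`: `0` on `[0,β/2]`, `1` on `[β,∞)`, linear in between. -/
noncomputable def phicut (β ξ : ℝ) : ℝ := min 1 (max 0 ((ξ - β/2) / (β/2)))

/-- The large-value cutoff `ζ_M`: `1` on `[0,M]`, `0` on `[M+1,∞)`, linear in between. -/
noncomputable def zetacut (M ξ : ℝ) : ℝ := min 1 (max 0 (M + 1 - ξ))

/-- `Φ_{β,M}(ξ) = ∫_0^ξ Φ′ φ_β ζ_M`. -/
noncomputable def PhiBM (Φ : ℝ → ℝ) (β M ξ : ℝ) : ℝ :=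
  ∫ s in (0:ℝ)..ξ, deriv Φ s * phicut β s * zetacut M s

/-- `Σ_{β,M}(ξ) = ∫_0^ξ (σ′)² φ_β ζ_M`. -/
noncomputable def SigmaBM (σ : ℝ → ℝ) (β M ξ : ℝ) : ℝ :=
  ∫ s in (0:ℝ)..ξ, (deriv σ s) ^ 2 * phicut β s * zetacut M s

/-!
Both cut-off primitives have bounded, compactly supported integrands, so they are Lipschitz and
the left-hand side is at most `K |ξ - γ|`. Far from `γ` this is the second term. Near `γ`, i.e.
on `[γ/2, 3γ/2]`, `Φ'` is bounded below by some `m > 0`, so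
`m |ξ - γ| ≤ |Φ ξ - Φ γ| = |√Φ ξ - √Φ γ| (√Φ ξ + √Φ γ)`, and since `Φ ≤ Φ (3γ/2)` there,
`|√Φ ξ - √Φ γ|` is bounded, hence dominated by a multiple of its own square root.
-/

open Set

lemma phicut_eq_zero {β s : ℝ} (hβ : 0 ≤ β) (hs : s ≤ β / 2) : phicut β s = 0 := by
  have h : (s - β / 2) / (β / 2) ≤ 0 := div_nonpos_of_nonpos_of_nonneg (by linarith) (by linarith)
  simp [phicut, max_eq_left h]

lemma zetacut_eq_zero {M s : ℝ} (hs : M + 1 ≤ s) : zetacut M s = 0 := by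
  have h : M + 1 - s ≤ 0 := by linarith
  simp [zetacut, max_eq_left h]

lemma continuous_phicut (β : ℝ) : Continuous (phicut β) := by unfold phicut; fun_prop

lemma continuous_zetacut (M : ℝ) : Continuous (zetacut M) := by unfold zetacut; fun_prop

section Cutoff

variable {F : ℝ → ℝ} {β : ℝ} (M : ℝ)

lemma continuous_mul_phicut_mul_zetacut (hF : ContinuousOn F (Ioi 0)) (hβ : 0 < β) :
    Continuous fun s => F s * phicut β s * zetacut M s := by
  refine continuous_iff_continuousAt.2 fun x => ?_
  rcases lt_or_ge x (β / 2) with hx | hx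
  · refine (continuousAt_const : ContinuousAt (fun _ => (0 : ℝ)) x).congr ?_
    filter_upwards [Iio_mem_nhds hx] with s hs
    simp [phicut_eq_zero hβ.le hs.le]
  · have hx0 : 0 < x := by linarith
    exact ((hF.continuousAt (Ioi_mem_nhds hx0)).mul (continuous_phicut β).continuousAt).mul
      (continuous_zetacut M).continuousAt

lemma hasCompactSupport_mul_phicut_mul_zetacut (hβ : 0 ≤ β) :
    HasCompactSupport fun s => F s * phicut β s * zetacut M s := by
  refine HasCompactSupport.intro (isCompact_Icc (a := β / 2) (b := M + 1)) fun s hs => ?_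
  rcases not_and_or.1 hs with hs | hs
  · simp [phicut_eq_zero hβ (not_le.1 hs).le]
  · simp [zetacut_eq_zero (not_le.1 hs).le]

end Cutoff

lemma exists_abs_primitive_sub_le {g : ℝ → ℝ} (hg : Continuous g) (hgc : HasCompactSupport g) :
    ∃ K, 0 ≤ K ∧ ∀ ξ γ : ℝ,
      |(∫ s in (0 : ℝ)..ξ, g s) - ∫ s in (0 : ℝ)..γ, g s| ≤ K * |ξ - γ| := by
  obtain ⟨K, hK⟩ := hg.bounded_above_of_compact_support hgc
  refine ⟨K, (norm_nonneg _).trans (hK 0), fun ξ γ => ?_⟩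
  rw [intervalIntegral.integral_interval_sub_left (hg.intervalIntegrable 0 ξ)
    (hg.intervalIntegrable 0 γ)]
  exact intervalIntegral.norm_integral_le_of_norm_le_const fun x _ => hK x

lemma exists_abs_cutoff_primitive_sub_le {F : ℝ → ℝ} (hF : ContinuousOn F (Ioi 0)) {β : ℝ}
    (hβ : 0 < β) (M : ℝ) :
    ∃ K, 0 ≤ K ∧ ∀ ξ γ : ℝ,
      |(∫ s in (0 : ℝ)..ξ, F s * phicut β s * zetacut M s)
        - ∫ s in (0 : ℝ)..γ, F s * phicut β s * zetacut M s| ≤ K * |ξ - γ| :=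
  exists_abs_primitive_sub_le (continuous_mul_phicut_mul_zetacut M hF hβ)
    (hasCompactSupport_mul_phicut_mul_zetacut M hβ.le)

lemma exists_pos_mul_abs_sub_le_abs_sub {f : ℝ → ℝ} {a b : ℝ} (hab : a ≤ b)
    (hf : ContinuousOn f (Icc a b)) (hfd : DifferentiableOn ℝ f (Ioo a b))
    (hf' : ContinuousOn (deriv f) (Icc a b)) (hf'pos : ∀ x ∈ Icc a b, 0 < deriv f x) :
    ∃ m, 0 < m ∧ ∀ x ∈ Icc a b, ∀ y ∈ Icc a b, m * |x - y| ≤ |f x - f y| := by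
  obtain ⟨x₀, hx₀, hmin⟩ := isCompact_Icc.exists_isMinOn (nonempty_Icc.2 hab) hf'
  have hmono : ∀ x ∈ Icc a b, ∀ y ∈ Icc a b, x ≤ y → deriv f x₀ * (y - x) ≤ f y - f x := by
    refine (convex_Icc a b).mul_sub_le_image_sub_of_le_deriv hf ?_ ?_
    · rwa [interior_Icc]
    · intro x hx
      rw [interior_Icc] at hx
      exact hmin (Ioo_subset_Icc_self hx)
  refine ⟨deriv f x₀, hf'pos x₀ hx₀, fun x hx y hy => ?_⟩
  wlog hxy : x ≤ y generalizing x y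
  · rw [abs_sub_comm x, abs_sub_comm (f x)]
    exact this y hy x hx (le_of_not_ge hxy)
  have hslope := hmono x hx y hy hxy
  have hnonneg := mul_nonneg (hf'pos x₀ hx₀).le (sub_nonneg.2 hxy)
  rwa [abs_sub_comm x, abs_sub_comm (f x), abs_of_nonneg (sub_nonneg.2 hxy),
    abs_of_nonneg (hnonneg.trans hslope)]

lemma abs_sub_le_mul_abs_sqrt_sub {u v A : ℝ} (hu : 0 ≤ u) (hv : 0 ≤ v) (huA : u ≤ A)
    (hvA : v ≤ A) : |u - v| ≤ 2 * √A * |√u - √v| := by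
  have hfactor : u - v = (√u - √v) * (√u + √v) := by
    linear_combination (Real.sq_sqrt hv) - (Real.sq_sqrt hu)
  have hsum : √u + √v ≤ 2 * √A := by
    linarith [Real.sqrt_le_sqrt huA, Real.sqrt_le_sqrt hvA]
  rw [hfactor, abs_mul, abs_of_nonneg (by positivity : 0 ≤ √u + √v), mul_comm]
  exact mul_le_mul_of_nonneg_right hsum (abs_nonneg _)

lemma abs_sqrt_sub_sqrt_le {u v A : ℝ} (huA : u ≤ A) (hvA : v ≤ A) :
    |√u - √v| ≤ √A := by
  have := Real.sqrt_le_sqrt huA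
  have := Real.sqrt_le_sqrt hvA
  rw [abs_sub_le_iff]
  constructor <;> linarith [Real.sqrt_nonneg u, Real.sqrt_nonneg v]

lemma le_sqrt_mul_sqrt_of_le {t B : ℝ} (ht : 0 ≤ t) (htB : t ≤ B) : t ≤ √B * √t := by
  calc t = √t * √t := (Real.mul_self_sqrt ht).symm
    _ ≤ √B * √t := by gcongr

section Phi

variable {Φ : ℝ → ℝ} {γ : ℝ}

lemma exists_abs_sub_le_mul_abs_sqrt_sub_near (hγ : 0 < γ)
    (hΦc : ContinuousOn Φ (Ici 0)) (hΦ0 : Φ 0 = 0)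
    (hΦdiff : DifferentiableOn ℝ Φ (Ioi 0))
    (hΦderiv : ContinuousOn (deriv Φ) (Ioi 0))
    (hΦpos : ∀ ξ : ℝ, 0 < ξ → 0 < deriv Φ ξ) :
    ∃ C, 0 < C ∧ ∀ ξ, |ξ - γ| < γ / 2 →
      |ξ - γ| ≤ C * |√(Φ ξ) - √(Φ γ)| ^ ((1 : ℝ) / 2) := by
  have hIcc : Icc (γ / 2) (3 * γ / 2) ⊆ Ioi 0 := fun x hx => by
    simp only [mem_Ioi]; linarith [hx.1]
  obtain ⟨m, hm, hmΦ⟩ := exists_pos_mul_abs_sub_le_abs_sub (by linarith)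
    (hΦc.mono (hIcc.trans Ioi_subset_Ici_self)) (hΦdiff.mono (Ioo_subset_Icc_self.trans hIcc))
    (hΦderiv.mono hIcc) fun x hx => hΦpos x (hIcc hx)
  have hΦmono : StrictMonoOn Φ (Ici 0) :=
    strictMonoOn_of_deriv_pos (convex_Ici 0) hΦc (by simpa using hΦpos)
  set A := Φ (3 * γ / 2)
  have hA : 0 < A := hΦ0 ▸ hΦmono self_mem_Ici (mem_Ici.2 (by linarith)) (by linarith)
  have hΦbounds : ∀ x ∈ Icc 0 (3 * γ / 2), 0 ≤ Φ x ∧ Φ x ≤ A := fun x hx =>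
    ⟨hΦ0 ▸ hΦmono.monotoneOn self_mem_Ici hx.1 hx.1,
      hΦmono.monotoneOn hx.1 (mem_Ici.2 (by linarith)) hx.2⟩
  refine ⟨2 * √A / m * √(√A), by positivity, fun ξ hnear => ?_⟩
  have hξ : ξ ∈ Icc (γ / 2) (3 * γ / 2) := by
    rw [abs_lt] at hnear
    constructor <;> linarith
  have hγ' : γ ∈ Icc (γ / 2) (3 * γ / 2) := ⟨by linarith, by linarith⟩
  obtain ⟨hξ0, hξA⟩ := hΦbounds ξ ⟨by linarith [hξ.1], hξ.2⟩
  obtain ⟨hγ0, hγA⟩ := hΦbounds γ ⟨hγ.le, hγ'.2⟩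
  set t := |√(Φ ξ) - √(Φ γ)|
  have ht : t ≤ √(√A) * √t := le_sqrt_mul_sqrt_of_le (abs_nonneg _) (abs_sqrt_sub_sqrt_le hξA hγA)
  rw [← Real.sqrt_eq_rpow]
  calc |ξ - γ| ≤ |Φ ξ - Φ γ| / m := by rw [le_div_iff₀' hm]; exact hmΦ ξ hξ γ hγ'
    _ ≤ 2 * √A * t / m := by gcongr; exact abs_sub_le_mul_abs_sqrt_sub hξ0 hγ0 hξA hγA
    _ ≤ 2 * √A * (√(√A) * √t) / m := by gcongr
    _ = 2 * √A / m * √(√A) * √t := by ring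

end Phi

theorem stmt16_general (Φ σ : ℝ → ℝ) (γ : ℝ) (hγ : 0 < γ)
    (hΦc : ContinuousOn Φ (Set.Ici 0)) (hΦ0 : Φ 0 = 0)
    (hΦdiff : DifferentiableOn ℝ Φ (Set.Ioi 0))
    (hΦderiv : ContinuousOn (deriv Φ) (Set.Ioi 0))
    (hΦpos : ∀ ξ : ℝ, 0 < ξ → 0 < deriv Φ ξ)
    (hσderiv : ContinuousOn (deriv σ) (Set.Ioi 0)) :
    ∀ β ∈ Set.Ioo (0:ℝ) 1, ∀ M : ℝ, 2 ≤ M →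
      ∃ c : ℝ, 0 < c ∧ ∀ ξ : ℝ, 0 ≤ ξ →
        |PhiBM Φ β M ξ - PhiBM Φ β M γ| + |SigmaBM σ β M ξ - SigmaBM σ β M γ|
          ≤ c * (|Real.sqrt (Φ ξ) - Real.sqrt (Φ γ)| ^ ((1:ℝ)/2)
            + (if γ/2 ≤ |ξ - γ| then |ξ - γ| else 0)) := by
  intro β hβ M _
  obtain ⟨K₁, hK₁, hΦBM⟩ := exists_abs_cutoff_primitive_sub_le hΦderiv hβ.1 M
  obtain ⟨K₂, hK₂, hSigmaBM⟩ := exists_abs_cutoff_primitive_sub_le (F := fun s => deriv σ s ^ 2)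
    (hσderiv.pow 2) hβ.1 M
  obtain ⟨C, hC, hnear⟩ := exists_abs_sub_le_mul_abs_sqrt_sub_near hγ hΦc hΦ0 hΦdiff hΦderiv hΦpos
  refine ⟨(K₁ + K₂ + 1) * (C + 1), by positivity, fun ξ _ => ?_⟩
  have hroot : 0 ≤ |Real.sqrt (Φ ξ) - Real.sqrt (Φ γ)| ^ ((1:ℝ)/2) := by positivity
  have hdist : |ξ - γ| ≤ (C + 1) * (|Real.sqrt (Φ ξ) - Real.sqrt (Φ γ)| ^ ((1:ℝ)/2)
      + (if γ/2 ≤ |ξ - γ| then |ξ - γ| else 0)) := by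
    split_ifs with hfar
    · nlinarith [abs_nonneg (ξ - γ)]
    · exact (hnear ξ (not_le.1 hfar)).trans (by nlinarith)
  calc |PhiBM Φ β M ξ - PhiBM Φ β M γ| + |SigmaBM σ β M ξ - SigmaBM σ β M γ|
      ≤ (K₁ + K₂) * |ξ - γ| := by rw [add_mul]; exact add_le_add (hΦBM ξ γ) (hSigmaBM ξ γ)
    _ ≤ (K₁ + K₂ + 1) * |ξ - γ| := mul_le_mul_of_nonneg_right (by linarith) (abs_nonneg _)
    _ ≤ _ := by rw [mul_assoc]; gcongr

/-- For every `β ∈ (0,1)` and `M ∈ [2,∞)` there exists `c_{β,M} > 0` such that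
`|Φ_{β,M}(ξ) − Φ_{β,M}(γ)| + |Σ_{β,M}(ξ) − Σ_{β,M}(γ)|
  ≤ c_{β,M} (|Φ^{1/2}(ξ) − Φ^{1/2}(γ)|^{1/2} + |ξ − γ| 𝟙_{|ξ−γ|≥γ/2})`. -/
theorem stmt16 (Φ σ : ℝ → ℝ) (γ : ℝ) (hγ : 0 < γ)
    (hΦc : ContinuousOn Φ (Set.Ici 0)) (hΦ0 : Φ 0 = 0)
    (hΦdiff : DifferentiableOn ℝ Φ (Set.Ioi 0))
    (hΦderiv : ContinuousOn (deriv Φ) (Set.Ioi 0))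
    (hΦpos : ∀ ξ : ℝ, 0 < ξ → 0 < deriv Φ ξ)
    (hσc : ContinuousOn σ (Set.Ici 0)) (hσ0 : σ 0 = 0)
    (hσdiff : DifferentiableOn ℝ σ (Set.Ioi 0))
    (hσderiv : ContinuousOn (deriv σ) (Set.Ioi 0)) :
    ∀ β ∈ Set.Ioo (0:ℝ) 1, ∀ M : ℝ, 2 ≤ M →
      ∃ c : ℝ, 0 < c ∧ ∀ ξ : ℝ, 0 ≤ ξ →
        |PhiBM Φ β M ξ - PhiBM Φ β M γ| + |SigmaBM σ β M ξ - SigmaBM σ β M γ|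
          ≤ c * (|Real.sqrt (Φ ξ) - Real.sqrt (Φ γ)| ^ ((1:ℝ)/2)
            + (if γ/2 ≤ |ξ - γ| then |ξ - γ| else 0)) :=
  stmt16_general Φ σ γ hγ hΦc hΦ0 hΦdiff hΦderiv hΦpos hσderiv
end
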